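/- arXiv:2104.03733 — 5 statements merged into one kernel-verified Lean document; each statement's English description precedes it below -/
import Mathlib

section
/- Let $d \geq 1$, $0 < s < d$, and let $\mu$ be a signed Borel measure on $\mathbb{R}^d$ of finite total variation. If for each point $x$ in a Borel set $A \subseteq \mathbb{R}^d$ there exists a sequence $t_n \downarrow 0$ with $\mu(B(x,t_n)) \geq 0$, then the restriction $\mu|_A$ is a non-negative measure. -/
open MeasureTheory Metric Filter Set Topology
open scoped ENNReal

/-!
Write `μ = μ⁺ - μ⁻` (Jordan decomposition), with `μ⁺ ⟂ μ⁻`. By Besicovitch's differentiation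
theorem, at `μ⁻`-almost every `x` the ratio `μ⁺ (B(x,r)) / μ⁻ (B(x,r))` tends to `0` along
closed balls, hence (exhausting open balls by closed ones) `μ (B(x,r)) < 0` for all small `r`. Such points cannot lie in `A`, hence `μ⁻ A = 0`.
-/

section Metric

variable {α : Type*} [PseudoMetricSpace α] [MeasurableSpace α]

theorem measure_ball_le_mul_of_forall_closedBall {μ ν : Measure α} {c : ℝ≥0∞} {x : α} {T : ℝ}
    (h : ∀ r ∈ Ioo 0 T, μ (closedBall x r) ≤ c * ν (closedBall x r)) :
    μ (ball x T) ≤ c * ν (ball x T) := by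
  rcases le_or_gt T 0 with hT | hT
  · simp [ball_eq_empty.2 hT]
  obtain ⟨u, hu_mono, hu_mem, hu_lim⟩ := exists_seq_strictMono_tendsto' hT
  have hball : ball x T = ⋃ m, closedBall x (u m) := by
    refine Subset.antisymm (fun y hy => ?_)
      (iUnion_subset fun m => closedBall_subset_ball (hu_mem m).2)
    obtain ⟨m, hm⟩ := (hu_lim.eventually (lt_mem_nhds (mem_ball.1 hy))).exists
    exact mem_iUnion.2 ⟨m, mem_closedBall.2 hm.le⟩
  have hmono : Monotone fun m => closedBall x (u m) := fun _ _ hmn =>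
    closedBall_subset_closedBall (hu_mono.monotone hmn)
  rw [hball, hmono.measure_iUnion]
  refine iSup_le fun m => (h _ (hu_mem m)).trans ?_
  gcongr
  exact subset_iUnion (fun m => closedBall x (u m)) m

theorem eventually_measure_ball_lt_of_closedBall {μ ν : Measure α} {x : α}
    (h : ∀ᶠ r in 𝓝[>] 0, μ (closedBall x r) < 2⁻¹ * ν (closedBall x r) ∧
      ν (closedBall x r) < ∞) :
    ∀ᶠ r in 𝓝[>] 0, μ (ball x r) < ν (ball x r) := by
  obtain ⟨r₀, hr₀, hsmall⟩ := mem_nhdsGT_iff_exists_Ioc_subset.1 h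
  filter_upwards [Ioo_mem_nhdsGT hr₀] with r hr
  have hsmall' : ∀ r' ∈ Ioo 0 r, r' ∈ Ioc 0 r₀ := fun r' hr' => ⟨hr'.1, hr'.2.le.trans hr.2.le⟩
  have hle : μ (ball x r) ≤ 2⁻¹ * ν (ball x r) :=
    measure_ball_le_mul_of_forall_closedBall fun r' hr' => (hsmall (hsmall' r' hr')).1.le
  have hpos : ν (ball x r) ≠ 0 := by
    have hhalf : r / 2 ∈ Ioo 0 r := ⟨half_pos hr.1, half_lt_self hr.1⟩
    have hhalf_pos : ν (closedBall x (r / 2)) ≠ 0 := fun h0 => by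
      simpa [h0] using (hsmall (hsmall' _ hhalf)).1
    exact (pos_iff_ne_zero.2 hhalf_pos).trans_le
      (measure_mono (closedBall_subset_ball hhalf.2)) |>.ne'
  have hfin : ν (ball x r) ≠ ∞ :=
    (measure_mono ball_subset_closedBall).trans_lt (hsmall ⟨hr.1, hr.2.le⟩).2 |>.ne
  calc μ (ball x r) ≤ 2⁻¹ * ν (ball x r) := hle
    _ = ν (ball x r) / 2 := (ENNReal.div_eq_inv_mul).symm
    _ < ν (ball x r) := ENNReal.half_lt_self hpos hfin

end Metric

section Besicovitch

variable {α : Type*} [MetricSpace α] [SecondCountableTopology α] [MeasurableSpace α]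
  [BorelSpace α] [HasBesicovitchCovering α]

theorem ae_eventually_measure_ball_lt_of_mutuallySingular {μ ν : Measure α}
    [IsLocallyFiniteMeasure μ] [IsLocallyFiniteMeasure ν] (hμν : μ ⟂ₘ ν) :
    ∀ᵐ x ∂ν, ∀ᶠ r in 𝓝[>] 0, μ (ball x r) < ν (ball x r) := by
  set v := Besicovitch.vitaliFamily ν
  filter_upwards [v.ae_eventually_measure_zero_of_singular hμν, v.ae_eventually_measure_pos]
    with x hx hνpos
  refine eventually_measure_ball_lt_of_closedBall ?_
  have hratio : ∀ᶠ r in 𝓝[>] 0, μ (closedBall x r) / ν (closedBall x r) < 2⁻¹ :=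
    (hx.comp (Besicovitch.tendsto_filterAt ν x)).eventually (gt_mem_nhds (by norm_num))
  filter_upwards [hratio, Besicovitch.tendsto_filterAt ν x hνpos,
    Besicovitch.tendsto_filterAt ν x (v.eventually_measure_lt_top x)] with r hr hpos hfin
  refine ⟨?_, hfin⟩
  rwa [ENNReal.div_lt_iff (Or.inl hpos.ne') (Or.inl hfin.ne)] at hr

theorem MeasureTheory.SignedMeasure.negPart_eq_zero_of_frequently_nonneg_ball
    (μ : SignedMeasure α)
    {A : Set α} (h : ∀ x ∈ A, ∃ᶠ r in 𝓝[>] 0, 0 ≤ μ (ball x r)) :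
    μ.toJordanDecomposition.negPart A = 0 := by
  set j := μ.toJordanDecomposition
  have hae := ae_iff.1 (ae_eventually_measure_ball_lt_of_mutuallySingular j.mutuallySingular)
  refine measure_mono_null ?_ hae
  intro x hx hball
  obtain ⟨r, hnonneg, hlt⟩ := ((h x hx).and_eventually hball).exists
  rw [μ.apply_eq_posPart_real_sub_negPart_real measurableSet_ball, sub_nonneg] at hnonneg
  exact (ENNReal.toReal_le_toReal (measure_ne_top _ _) (measure_ne_top _ _)).1 hnonneg |>.not_gt hlt

theorem MeasureTheory.SignedMeasure.nonneg_of_frequently_nonneg_ball (μ : SignedMeasure α)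
    {A : Set α} (h : ∀ x ∈ A, ∃ᶠ r in 𝓝[>] 0, 0 ≤ μ (ball x r)) {E : Set α}
    (hE : MeasurableSet E) (hEA : E ⊆ A) : 0 ≤ μ E := by
  have hnegE : μ.toJordanDecomposition.negPart E = 0 :=
    measure_mono_null hEA (negPart_eq_zero_of_frequently_nonneg_ball μ h)
  simp [μ.apply_eq_posPart_real_sub_negPart_real hE, measureReal_def, hnegE]

end Besicovitch

theorem stmt0_general (d : ℕ)
    (μ : MeasureTheory.SignedMeasure (EuclideanSpace ℝ (Fin d)))
    (A : Set (EuclideanSpace ℝ (Fin d)))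
    (h : ∀ x ∈ A, ∃ t : ℕ → ℝ, (∀ n, 0 < t n) ∧ StrictAnti t ∧
      Tendsto t atTop (nhds 0) ∧ ∀ n, 0 ≤ μ (ball x (t n))) :
    ∀ E : Set (EuclideanSpace ℝ (Fin d)), MeasurableSet E → E ⊆ A → 0 ≤ μ E := by
  have hfreq : ∀ x ∈ A, ∃ᶠ r in 𝓝[>] 0, 0 ≤ μ (ball x r) := by
    intro x hx
    obtain ⟨t, ht_pos, -, ht_lim, ht_nonneg⟩ := h x hx
    exact (tendsto_nhdsWithin_iff.2 ⟨ht_lim, .of_forall ht_pos⟩).frequently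
      (.of_forall ht_nonneg)
  exact fun E hE hEA => SignedMeasure.nonneg_of_frequently_nonneg_ball μ hfreq hE hEA

theorem stmt0 (d : ℕ) (hd : 1 ≤ d) (s : ℝ) (hs : 0 < s) (hsd : s < d)
    (μ : MeasureTheory.SignedMeasure (EuclideanSpace ℝ (Fin d)))
    (A : Set (EuclideanSpace ℝ (Fin d))) (hA : MeasurableSet A)
    (h : ∀ x ∈ A, ∃ t : ℕ → ℝ, (∀ n, 0 < t n) ∧ StrictAnti t ∧
      Tendsto t atTop (nhds 0) ∧ ∀ n, 0 ≤ μ (ball x (t n))) :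
    ∀ E : Set (EuclideanSpace ℝ (Fin d)), MeasurableSet E → E ⊆ A → 0 ≤ μ E :=
  stmt0_general d μ A h
end

section
/- Let $0 < s < d$ and let $\mu, \mu^*$ be as in the Kelvin transform setting (with $\mu^*$ the pushforward under $T$ of $\frac{(2y_{d+1})^{s/2}}{|t-y|^s}d\mu(t)$). Then the Riesz $s$-energies coincide: $I_s(\mu^*) = I_s(\mu)$, where $I_s(\sigma) = \iint |x-t|^{-s} d\sigma(x) d\sigma(t)$. -/
/-! Inversion in the sphere of radius `R` about `y` is a measurable involution which scales the
distance of `x` and `t` by `R ^ 2 / (‖x - y‖ * ‖t - y‖)`. After the change of variables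
`x ↦ T x`, `t ↦ T t`, the weights `R ^ s / ‖x - y‖ ^ s` and `R ^ s / ‖t - y‖ ^ s` of `μ*` cancel
this factor in the Riesz kernel exactly, away from the `μ`-null point `y`. The map `T` of the
theorem is the inversion of radius `√(2c)`. -/

open MeasureTheory EuclideanGeometry
open scoped ENNReal

lemma Real.rpow_div_mul_rpow_div_mul_rpow_neg {R A B r : ℝ} (s : ℝ) (hR : 0 < R) (hA : 0 < A)
    (hB : 0 < B) (hr : 0 ≤ r) :
    R ^ s / A ^ s * (R ^ s / B ^ s * (R ^ 2 / (A * B) * r) ^ (-s)) = r ^ (-s) := by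
  have hRs : (R ^ 2) ^ (-s) = R ^ (-s) * R ^ (-s) := by
    rw [← Real.rpow_natCast, ← Real.rpow_mul hR.le, ← Real.rpow_add hR]; ring_nf
  rw [Real.mul_rpow (by positivity) hr, Real.div_rpow (by positivity) (by positivity),
    Real.mul_rpow hA.le hB.le, hRs, Real.rpow_neg hR.le, Real.rpow_neg hA.le, Real.rpow_neg hB.le]
  have : R ^ s ≠ 0 := (Real.rpow_pos_of_pos hR s).ne'
  have : A ^ s ≠ 0 := (Real.rpow_pos_of_pos hA s).ne'
  have : B ^ s ≠ 0 := (Real.rpow_pos_of_pos hB s).ne'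
  field_simp

theorem MeasureTheory.lintegral_lintegral_map_withDensity {α β : Type*} [MeasurableSpace α]
    [MeasurableSpace β] {μ : Measure α} (e : α ≃ᵐ β) {g : α → ℝ≥0∞} (hg : Measurable g)
    (hg_fin : ∀ᵐ x ∂μ, g x < ∞) (K : β → β → ℝ≥0∞) :
    ∫⁻ x, ∫⁻ t, K x t ∂(μ.withDensity g).map e ∂(μ.withDensity g).map e =
      ∫⁻ x, g x * ∫⁻ t, g t * K (e x) (e t) ∂μ ∂μ := by
  simp only [lintegral_map_equiv]
  rw [lintegral_withDensity_eq_lintegral_mul_non_measurable μ hg hg_fin]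
  refine lintegral_congr fun x => ?_
  rw [Pi.mul_apply, lintegral_withDensity_eq_lintegral_mul_non_measurable μ hg hg_fin]
  rfl

noncomputable def rieszEnergy {E : Type*} [SeminormedAddCommGroup E] [MeasurableSpace E]
    (s : ℝ) (μ : Measure E) : ℝ≥0∞ :=
  ∫⁻ x, ∫⁻ t, ENNReal.ofReal (‖x - t‖ ^ (-s)) ∂μ ∂μ

section Kelvin

variable {E : Type*} [NormedAddCommGroup E] [InnerProductSpace ℝ E] {y : E} {R : ℝ} (s : ℝ)

lemma ofReal_kelvin_weight_mul_rpow_neg_inversion (hR : 0 < R) {x t : E} (hx : x ≠ y)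
    (ht : t ≠ y) :
    ENNReal.ofReal (R ^ s / ‖x - y‖ ^ s) * (ENNReal.ofReal (R ^ s / ‖t - y‖ ^ s) *
      ENNReal.ofReal (‖inversion y R x - inversion y R t‖ ^ (-s))) =
      ENNReal.ofReal (‖x - t‖ ^ (-s)) := by
  have hxy : 0 < ‖x - y‖ := norm_pos_iff.2 (sub_ne_zero.2 hx)
  have hty : 0 < ‖t - y‖ := norm_pos_iff.2 (sub_ne_zero.2 ht)
  have hdist : ‖inversion y R x - inversion y R t‖ = R ^ 2 / (‖x - y‖ * ‖t - y‖) * ‖x - t‖ := by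
    simpa only [dist_eq_norm] using dist_inversion_inversion hx ht R
  rw [← ENNReal.ofReal_mul (by positivity), ← ENNReal.ofReal_mul (by positivity), hdist,
    Real.rpow_div_mul_rpow_div_mul_rpow_neg s hR hxy hty (norm_nonneg _)]

variable [MeasurableSpace E] [BorelSpace E] [SecondCountableTopology E]

lemma measurable_inversion (y : E) (R : ℝ) : Measurable (inversion y R) := by
  unfold inversion
  fun_prop

noncomputable def inversionMeasurableEquiv (y : E) (hR : R ≠ 0) : E ≃ᵐ E where
  toFun := inversion y R
  invFun := inversion y R
  left_inv := inversion_involutive y hR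
  right_inv := inversion_involutive y hR
  measurable_toFun := measurable_inversion y R
  measurable_invFun := measurable_inversion y R

noncomputable def kelvinTransform (y : E) (R : ℝ) (μ : Measure E) : Measure E :=
  (μ.withDensity fun t => ENNReal.ofReal (R ^ s / ‖t - y‖ ^ s)).map (inversion y R)

theorem rieszEnergy_kelvinTransform (hR : 0 < R) {μ : Measure E} (hμ : μ {y} = 0) :
    rieszEnergy s (kelvinTransform s y R μ) = rieszEnergy s μ := by
  have hae : ∀ᵐ x ∂μ, x ≠ y := measure_eq_zero_iff_ae_notMem.1 hμ
  have hweight : Measurable fun t : E => ENNReal.ofReal (R ^ s / ‖t - y‖ ^ s) := by fun_prop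
  rw [rieszEnergy, kelvinTransform, show inversion y R = inversionMeasurableEquiv y hR.ne' from rfl,
    lintegral_lintegral_map_withDensity _ hweight (.of_forall fun _ => ENNReal.ofReal_lt_top)]
  refine lintegral_congr_ae (hae.mono fun x hx => ?_)
  dsimp only
  rw [← lintegral_const_mul' _ _ ENNReal.ofReal_ne_top]
  exact lintegral_congr_ae (hae.mono fun t ht =>
    ofReal_kelvin_weight_mul_rpow_neg_inversion s hR hx ht)

end Kelvin

theorem stmt4_general (d : ℕ) (s : ℝ)
    (y : EuclideanSpace ℝ (Fin (d + 1))) (c : ℝ) (hc : 0 < c)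
    (T : EuclideanSpace ℝ (Fin (d + 1)) → EuclideanSpace ℝ (Fin (d + 1)))
    (hT : ∀ x, T x = y + ((2 * c) / ‖x - y‖ ^ 2) • (x - y))
    (μ : Measure (EuclideanSpace ℝ (Fin (d + 1)))) (hμy : μ {y} = 0)
    (μstar : Measure (EuclideanSpace ℝ (Fin (d + 1))))
    (hμstar : μstar =
      (μ.withDensity fun t => ENNReal.ofReal ((2 * c) ^ (s / 2) / ‖t - y‖ ^ s)).map T) :
    ∫⁻ x, ∫⁻ t, ENNReal.ofReal (‖x - t‖ ^ (-s)) ∂μstar ∂μstar =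
      ∫⁻ x, ∫⁻ t, ENNReal.ofReal (‖x - t‖ ^ (-s)) ∂μ ∂μ := by
  have hR : 0 < √(2 * c) := Real.sqrt_pos.2 (by positivity)
  have hT_eq : T = inversion y √(2 * c) := funext fun x => by
    rw [hT, inversion, div_pow, Real.sq_sqrt (by positivity), dist_eq_norm, vsub_eq_sub,
      vadd_eq_add, add_comm y]
  have hRs : (2 * c) ^ (s / 2) = √(2 * c) ^ s := by
    rw [Real.sqrt_eq_rpow, ← Real.rpow_mul (by positivity), one_div_mul_eq_div]
  have hμstar' : μstar = kelvinTransform s y √(2 * c) μ := by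
    rw [hμstar, hT_eq, hRs, kelvinTransform]
  exact hμstar' ▸ rieszEnergy_kelvinTransform s hR hμy

theorem stmt4 (d : ℕ) (hd : 2 ≤ d) (s : ℝ) (hs : 0 < s) (hsd : s < (d : ℝ))
    (y : EuclideanSpace ℝ (Fin (d + 1))) (c : ℝ) (hc : 0 < c) (hyc : y (Fin.last d) = c)
    (T : EuclideanSpace ℝ (Fin (d + 1)) → EuclideanSpace ℝ (Fin (d + 1)))
    (hT : ∀ x, T x = y + ((2 * c) / ‖x - y‖ ^ 2) • (x - y))
    (μ : Measure (EuclideanSpace ℝ (Fin (d + 1)))) (hμy : μ {y} = 0)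
    (μstar : Measure (EuclideanSpace ℝ (Fin (d + 1))))
    (hμstar : μstar =
      (μ.withDensity fun t => ENNReal.ofReal ((2 * c) ^ (s / 2) / ‖t - y‖ ^ s)).map T) :
    ∫⁻ x, ∫⁻ t, ENNReal.ofReal (‖x - t‖ ^ (-s)) ∂μstar ∂μstar =
      ∫⁻ x, ∫⁻ t, ENNReal.ofReal (‖x - t‖ ^ (-s)) ∂μ ∂μ :=
  stmt4_general d s y c hc T hT μ hμy μstar hμstar
end

section
/- Let $d \geq 2$, $d-2 < s < d$, $\alpha = d-s$, $R > 0$, and $y_{d+1} > 0$. Then for all $x \in \mathbb{R}^d$ with $|x| < R$, the following inequality holds: $\frac{(R^2-|x|^2)^{\alpha/2-1}}{(|x|^2+y_{d+1}^2)^{d-s/2}} \geq \frac{\sin(\alpha\pi/2)}{\pi} \int_0^{\infty} \frac{v^{\alpha/2-1}\,dv}{(v+R^2+y_{d+1}^2)^{d-s/2}(v+R^2-|x|^2)}$. -/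
/-! With `a = |x|² + c²` and `b = R² - |x|²`, the factor `(v + R² + c²)^(d - s/2)` is at least
`a^(d - s/2)`, so the integral is at most `a^(-(d - s/2)) ∫₀^∞ v^(t-1) / (v + b) dv` with
`t = α/2 ∈ (0, 1)`. The substitution `v = b x / (1 - x)` turns this integral into
`b^(t-1) B(t, 1 - t) = b^(t-1) Γ(t) Γ(1 - t) = b^(t-1) π / sin (π t)`, and the factor
`sin (α π / 2) / π` cancels the constant exactly. -/

open MeasureTheory Set Real

lemma ofReal_cpow_mul_one_sub_cpow {u v x : ℝ} (hx : x ∈ Ioc (0 : ℝ) 1) :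
    (x : ℂ) ^ ((u : ℂ) - 1) * (1 - (x : ℂ)) ^ ((v : ℂ) - 1) =
      ((x ^ (u - 1) * (1 - x) ^ (v - 1) : ℝ) : ℂ) := by
  rw [Complex.ofReal_mul, Complex.ofReal_cpow hx.1.le, Complex.ofReal_cpow (sub_nonneg.2 hx.2)]
  push_cast
  rfl

theorem integrableOn_rpow_mul_one_sub_rpow {u v : ℝ} (hu : 0 < u) (hv : 0 < v) :
    IntegrableOn (fun x : ℝ ↦ x ^ (u - 1) * (1 - x) ^ (v - 1)) (Ioc 0 1) := by
  have hconv := Complex.betaIntegral_convergent (u := u) (v := v) (by simpa) (by simpa)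
  rw [intervalIntegrable_iff_integrableOn_Ioc_of_le zero_le_one] at hconv
  simpa [IntegrableOn] using
    (hconv.congr_fun (fun x hx ↦ ofReal_cpow_mul_one_sub_cpow hx) measurableSet_Ioc).re

theorem integral_rpow_mul_one_sub_rpow {u v : ℝ} (hu : 0 < u) (hv : 0 < v) :
    ∫ x in Ioc 0 1, x ^ (u - 1) * (1 - x) ^ (v - 1) = Gamma u * Gamma v / Gamma (u + v) := by
  have h := Complex.betaIntegral_eq_Gamma_mul_div u v (by simpa) (by simpa)
  rw [Complex.betaIntegral, intervalIntegral.integral_of_le zero_le_one,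
    setIntegral_congr_fun measurableSet_Ioc fun x hx ↦ ofReal_cpow_mul_one_sub_cpow hx,
    integral_complex_ofReal, ← Complex.ofReal_add, Complex.Gamma_ofReal, Complex.Gamma_ofReal,
    Complex.Gamma_ofReal] at h
  exact_mod_cast h

theorem integral_rpow_mul_one_sub_rpow_neg {t : ℝ} (ht₀ : 0 < t) (ht₁ : t < 1) :
    ∫ x in Ioc 0 1, x ^ (t - 1) * (1 - x) ^ (-t) = π / sin (π * t) := by
  have h := integral_rpow_mul_one_sub_rpow ht₀ (sub_pos.2 ht₁)
  rw [add_sub_cancel, Gamma_one, div_one, Gamma_mul_Gamma_one_sub, sub_sub_cancel_left] at h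
  exact h

section Substitution

variable {b : ℝ}

lemma hasDerivAt_mul_div_one_sub (b : ℝ) {x : ℝ} (hx : x ≠ 1) :
    HasDerivAt (fun x ↦ b * x / (1 - x)) (b / (1 - x) ^ 2) x := by
  have h1x : 1 - x ≠ 0 := sub_ne_zero.2 hx.symm
  refine (((hasDerivAt_id x).const_mul b).div ((hasDerivAt_id x).const_sub 1) h1x).congr_deriv ?_
  simp only [id]
  ring

lemma injOn_mul_div_one_sub (hb : b ≠ 0) : InjOn (fun x ↦ b * x / (1 - x)) (Iio 1) := by
  intro x hx y hy h
  rw [div_eq_div_iff (sub_ne_zero.2 (ne_of_gt hx)) (sub_ne_zero.2 (ne_of_gt hy))] at h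
  exact mul_left_cancel₀ hb (by linarith)

lemma image_mul_div_one_sub_Ioo (hb : 0 < b) :
    (fun x ↦ b * x / (1 - x)) '' Ioo 0 1 = Ioi 0 := by
  ext w
  constructor
  · rintro ⟨x, ⟨hx₀, hx₁⟩, rfl⟩
    exact div_pos (mul_pos hb hx₀) (sub_pos.2 hx₁)
  · intro (hw : 0 < w)
    refine ⟨w / (w + b), ⟨by positivity, (div_lt_one (by positivity)).2 (by linarith)⟩, ?_⟩
    dsimp only
    rw [one_sub_div (by positivity), add_sub_cancel_left]
    field_simp

lemma abs_deriv_mul_rpow_div_add {t x : ℝ} (hb : 0 < b) (hx : x ∈ Ioo (0 : ℝ) 1) :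
    |b / (1 - x) ^ 2| * ((b * x / (1 - x)) ^ (t - 1) / (b * x / (1 - x) + b)) =
      b ^ (t - 1) * (x ^ (t - 1) * (1 - x) ^ (-t)) := by
  have h1x : 0 < 1 - x := sub_pos.2 hx.2
  rw [abs_of_pos (by positivity), div_rpow (by nlinarith [hx.1]) h1x.le, mul_rpow hb.le hx.1.le,
    rpow_sub h1x, rpow_one, rpow_neg h1x.le]
  have : (1 - x) ^ t ≠ 0 := by positivity
  field_simp
  ring

theorem integrableOn_rpow_div_add {t : ℝ} (ht₀ : 0 < t) (ht₁ : t < 1) (hb : 0 < b) :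
    IntegrableOn (fun v : ℝ ↦ v ^ (t - 1) / (v + b)) (Ioi 0) := by
  rw [← image_mul_div_one_sub_Ioo hb, integrableOn_image_iff_integrableOn_abs_deriv_smul
    measurableSet_Ioo (fun x hx ↦ (hasDerivAt_mul_div_one_sub b hx.2.ne).hasDerivWithinAt)
    ((injOn_mul_div_one_sub hb.ne').mono fun x hx ↦ hx.2)]
  refine IntegrableOn.congr_fun ?_ (fun x hx ↦ (abs_deriv_mul_rpow_div_add hb hx).symm)
    measurableSet_Ioo
  have hbeta := integrableOn_rpow_mul_one_sub_rpow ht₀ (sub_pos.2 ht₁)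
  rw [sub_sub_cancel_left] at hbeta
  exact (hbeta.mono_set Ioo_subset_Ioc_self).const_mul _

theorem integral_rpow_div_add {t : ℝ} (ht₀ : 0 < t) (ht₁ : t < 1) (hb : 0 < b) :
    ∫ v in Ioi 0, v ^ (t - 1) / (v + b) = b ^ (t - 1) * (π / sin (π * t)) := by
  rw [← image_mul_div_one_sub_Ioo hb, integral_image_eq_integral_abs_deriv_smul
    measurableSet_Ioo (fun x hx ↦ (hasDerivAt_mul_div_one_sub b hx.2.ne).hasDerivWithinAt)
    ((injOn_mul_div_one_sub hb.ne').mono fun x hx ↦ hx.2)]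
  simp_rw [smul_eq_mul]
  rw [setIntegral_congr_fun measurableSet_Ioo fun x hx ↦ abs_deriv_mul_rpow_div_add hb hx,
    integral_const_mul, ← integral_Ioc_eq_integral_Ioo,
    integral_rpow_mul_one_sub_rpow_neg ht₀ ht₁]

end Substitution

theorem sin_div_pi_mul_integral_rpow_div_le {t p a b K : ℝ} (ht₀ : 0 < t) (ht₁ : t < 1)
    (hp : 0 ≤ p) (ha : 0 < a) (haK : a ≤ K) (hb : 0 < b) :
    sin (π * t) / π * ∫ v in Ioi 0, v ^ (t - 1) / ((v + K) ^ p * (v + b)) ≤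
      b ^ (t - 1) / a ^ p := by
  have hsin : 0 < sin (π * t) := sin_pos_of_pos_of_lt_pi (by positivity) (by nlinarith [pi_pos])
  have hdom : ∀ v ∈ Ioi (0 : ℝ),
      v ^ (t - 1) / ((v + K) ^ p * (v + b)) ≤ (a ^ p)⁻¹ * (v ^ (t - 1) / (v + b)) := by
    intro v (hv : 0 < v)
    rw [mul_div_assoc', inv_mul_eq_div, div_div]
    gcongr
    linarith
  have hmono : ∫ v in Ioi 0, v ^ (t - 1) / ((v + K) ^ p * (v + b)) ≤
      ∫ v in Ioi 0, (a ^ p)⁻¹ * (v ^ (t - 1) / (v + b)) := by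
    refine setIntegral_mono_of_nonneg (fun v (hv : 0 < v) ↦ ?_) hdom
      ((integrableOn_rpow_div_add ht₀ ht₁ hb).const_mul _)
    have : 0 < v + K := by linarith
    positivity
  calc sin (π * t) / π * ∫ v in Ioi 0, v ^ (t - 1) / ((v + K) ^ p * (v + b))
      ≤ sin (π * t) / π * ∫ v in Ioi 0, (a ^ p)⁻¹ * (v ^ (t - 1) / (v + b)) := by gcongr
    _ = b ^ (t - 1) / a ^ p := by
      rw [integral_const_mul, integral_rpow_div_add ht₀ ht₁ hb]
      field_simp

theorem stmt7_general (d : ℕ) (s : ℝ) (hs : (d : ℝ) - 2 < s) (hsd : s < (d : ℝ))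
    (α : ℝ) (hα : α = (d : ℝ) - s) (R : ℝ) (c : ℝ) (hc : 0 < c)
    (x : EuclideanSpace ℝ (Fin d)) (hx : ‖x‖ < R) :
    Real.sin (α * Real.pi / 2) / Real.pi *
        ∫ v in Set.Ioi (0 : ℝ),
          v ^ (α / 2 - 1) /
            ((v + R ^ 2 + c ^ 2) ^ ((d : ℝ) - s / 2) * (v + R ^ 2 - ‖x‖ ^ 2)) ≤
      (R ^ 2 - ‖x‖ ^ 2) ^ (α / 2 - 1) / (‖x‖ ^ 2 + c ^ 2) ^ ((d : ℝ) - s / 2) := by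
  have hxR : ‖x‖ ^ 2 < R ^ 2 := pow_lt_pow_left₀ hx (norm_nonneg x) two_ne_zero
  have h := sin_div_pi_mul_integral_rpow_div_le (t := α / 2) (p := (d : ℝ) - s / 2)
    (a := ‖x‖ ^ 2 + c ^ 2) (K := R ^ 2 + c ^ 2) (by linarith) (by linarith)
    (by linarith [d.cast_nonneg (α := ℝ)]) (by positivity) (by linarith) (sub_pos.2 hxR)
  simp only [← add_assoc, ← add_sub_assoc] at h
  rwa [mul_comm α, mul_div_assoc]

theorem stmt7 (d : ℕ) (hd : 2 ≤ d) (s : ℝ) (hs : (d : ℝ) - 2 < s) (hsd : s < (d : ℝ))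
    (α : ℝ) (hα : α = (d : ℝ) - s) (R : ℝ) (hR : 0 < R) (c : ℝ) (hc : 0 < c)
    (x : EuclideanSpace ℝ (Fin d)) (hx : ‖x‖ < R) :
    Real.sin (α * Real.pi / 2) / Real.pi *
        ∫ v in Set.Ioi (0 : ℝ),
          v ^ (α / 2 - 1) /
            ((v + R ^ 2 + c ^ 2) ^ ((d : ℝ) - s / 2) * (v + R ^ 2 - ‖x‖ ^ 2)) ≤
      (R ^ 2 - ‖x‖ ^ 2) ^ (α / 2 - 1) / (‖x‖ ^ 2 + c ^ 2) ^ ((d : ℝ) - s / 2) :=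
  stmt7_general d s hs hsd α hα R c hc x hx
end

section
/- Let $d \geq 2$, $0 < s < d$, $R > 0$, $y_{d+1} > 0$, and let $\omega_R$ be the measure on the ball $B_R \subset \mathbb{R}^d$ with density $\omega_R'(x) = \frac{c_R}{(R^2-|x|^2)^{\alpha/2}}$, where $\alpha = d-s$ and $c_R = \frac{\pi^{-d/2}\Gamma(1+s/2)}{R^s \Gamma(1-\alpha/2)}$ (assume $d-2 < s < d$). Then the Riesz $s$-potential of $\omega_R$ at the point $y = (0,\dots,0,y_{d+1}) \in \mathbb{R}^{d+1}$ equals $U^{\omega_R}(y) = y_{d+1}^{-s}\, {}_2F_1\left(\frac{s}{2},\frac{d}{2},1+\frac{s}{2},-\frac{R^2}{y_{d+1}^2}\right)$. -/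
/-!
In polar coordinates, with the substitution `‖x‖² = R² t`, a radial integral over the
ball becomes `π^{d/2} R^d / Γ(d/2) · ∫₀¹ t^{d/2-1} g(R² t) dt`. Factoring `R²` out of
`R² - ‖x‖²` and `c²` out of `‖x‖² + c²` turns the integrand into the Euler integrand of
`₂F₁(s/2, d/2; 1 + s/2; -R²/c²)`, and `c_R` is exactly the constant that turns the
volume factor into the Gamma quotient in front of the Euler integral.
-/

open MeasureTheory

/-- Gauss hypergeometric function `₂F₁(a,b;c;z)` via the Euler integral representation. -/
noncomputable def twoF1 (a b c z : ℝ) : ℝ :=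
  (Real.Gamma c / (Real.Gamma b * Real.Gamma (c - b))) *
    ∫ x in Set.Ioo (0 : ℝ) 1, x ^ (b - 1) * (1 - x) ^ (c - b - 1) * (1 - z * x) ^ (-a)

open Set Metric Real

section

variable {E F : Type*} [NormedAddCommGroup E] [NormedSpace ℝ E] [FiniteDimensional ℝ E]
  [Nontrivial E] [MeasurableSpace E] [BorelSpace E] [NormedAddCommGroup F] [NormedSpace ℝ F]

theorem setIntegral_ball_fun_norm_addHaar (μ : Measure E) [μ.IsAddHaarMeasure] (f : ℝ → F)
    (r : ℝ) :
    ∫ x in ball (0 : E) r, f ‖x‖ ∂μ = Module.finrank ℝ E • μ.real (ball 0 1) •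
      ∫ y in Ioo 0 r, y ^ (Module.finrank ℝ E - 1) • f y := by
  have h_ind : ∫ x in ball (0 : E) r, f ‖x‖ ∂μ = ∫ x, (Iio r).indicator f ‖x‖ ∂μ := by
    rw [← integral_indicator measurableSet_ball]
    congr with x
    by_cases hx : ‖x‖ < r <;> simp [hx]
  rw [h_ind, integral_fun_norm_addHaar, ← Ioi_inter_Iio,
    ← setIntegral_indicator measurableSet_Iio]
  congr 3 with y
  by_cases hy : y < r <;> simp [hy]

end

theorem setIntegral_Ioo_rpow_mul_comp_sq (p : ℝ) {R : ℝ} (hR : 0 < R) (g : ℝ → ℝ) :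
    ∫ r in Ioo 0 R, r ^ (p - 1) * g (r ^ 2) =
      R ^ p / 2 * ∫ t in Ioo 0 1, t ^ (p / 2 - 1) * g (R ^ 2 * t) := by
  have h_image : (fun r => (r / R) ^ 2) '' Ioo 0 R = Ioo 0 1 := by
    ext t
    constructor
    · rintro ⟨r, ⟨hr0, hrR⟩, rfl⟩
      have : r / R < 1 := (div_lt_one hR).2 hrR
      exact ⟨by positivity, by nlinarith [div_pos hr0 hR]⟩
    · rintro ⟨ht0, ht1⟩
      refine ⟨R * √t, ⟨by positivity, ?_⟩, ?_⟩
      · simpa using mul_lt_mul_of_pos_left ((sqrt_lt' one_pos).2 (by simpa using ht1)) hR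
      · simp [hR.ne', sq_sqrt ht0.le]
  have h_deriv : ∀ r ∈ Ioo 0 R,
      HasDerivWithinAt (fun r => (r / R) ^ 2) (2 * r / R ^ 2) (Ioo 0 R) r := fun r _ =>
    (((hasDerivAt_id r).div_const R).pow 2).hasDerivWithinAt.congr_deriv (by simp; ring)
  have h_inj : InjOn (fun r => (r / R) ^ 2) (Ioo 0 R) := fun a ha b hb hab =>
    (div_left_inj' hR.ne').1 ((pow_left_inj₀ (div_pos ha.1 hR).le (div_pos hb.1 hR).le
      two_ne_zero).1 hab)
  rw [← h_image, integral_image_eq_integral_abs_deriv_smul measurableSet_Ioo h_deriv h_inj,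
    ← integral_const_mul]
  refine setIntegral_congr_fun measurableSet_Ioo fun r ⟨hr, _⟩ => ?_
  have h_pow : ((r / R) ^ 2) ^ (p / 2 - 1) = r ^ (p - 2) / R ^ (p - 2) := by
    rw [← rpow_natCast, ← rpow_mul (by positivity), div_rpow hr.le hR.le]
    ring_nf
  have h_arg : R ^ 2 * (r / R) ^ 2 = r ^ 2 := by field_simp
  rw [abs_of_pos (by positivity), smul_eq_mul, h_pow, h_arg, rpow_sub_one hr.ne', rpow_sub hr,
    rpow_sub hR, rpow_two, rpow_two]
  field_simp

theorem volume_real_ball_one_euclideanSpace (d : ℕ) [NeZero d] :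
    volume.real (ball (0 : EuclideanSpace ℝ (Fin d)) 1) =
      π ^ ((d : ℝ) / 2) / Gamma (d / 2 + 1) := by
  rw [measureReal_def, EuclideanSpace.volume_ball, Fintype.card_fin, ENNReal.ofReal_one, one_pow,
    one_mul, ENNReal.toReal_ofReal (by positivity), sqrt_eq_rpow, ← rpow_natCast,
    ← rpow_mul pi_pos.le]
  ring_nf

theorem setIntegral_ball_euclideanSpace_comp_norm_sq {d : ℕ} [NeZero d] {R : ℝ} (hR : 0 < R)
    (g : ℝ → ℝ) :
    ∫ x in ball (0 : EuclideanSpace ℝ (Fin d)) R, g (‖x‖ ^ 2) =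
      π ^ ((d : ℝ) / 2) / Gamma (d / 2) * R ^ (d : ℝ) *
        ∫ t in Ioo 0 1, t ^ ((d : ℝ) / 2 - 1) * g (R ^ 2 * t) := by
  have h_pow : ∀ r ∈ Ioo 0 R, r ^ (d - 1) * g (r ^ 2) = r ^ ((d : ℝ) - 1) * g (r ^ 2) := by
    intro r _
    rw [← rpow_natCast, Nat.cast_sub NeZero.one_le, Nat.cast_one]
  have h_d : (d : ℝ) ≠ 0 := NeZero.ne _
  rw [setIntegral_ball_fun_norm_addHaar volume (fun r => g (r ^ 2)), finrank_euclideanSpace_fin,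
    volume_real_ball_one_euclideanSpace]
  simp only [nsmul_eq_mul, smul_eq_mul]
  rw [setIntegral_congr_fun measurableSet_Ioo h_pow, setIntegral_Ioo_rpow_mul_comp_sq _ hR,
    Gamma_add_one (by positivity)]
  field_simp

theorem div_rpow_mul_rpow_eq_euler_integrand {R c t : ℝ} (hR : 0 < R) (hc : 0 < c)
    (ht : t ∈ Ioo 0 1) (k a s : ℝ) :
    k / (R ^ 2 - R ^ 2 * t) ^ a * (R ^ 2 * t + c ^ 2) ^ (-s / 2) =
      k * R ^ (-(2 * a)) * c ^ (-s) *
        ((1 - t) ^ (-a) * (1 - -(R ^ 2 / c ^ 2) * t) ^ (-(s / 2))) := by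
  have h_one_sub : 0 < 1 - t := sub_pos.2 ht.2
  have h_euler_arg : 0 < 1 - -(R ^ 2 / c ^ 2) * t := by
    have : 0 < R ^ 2 / c ^ 2 * t := by have := ht.1; positivity
    linarith
  have h_density : R ^ 2 - R ^ 2 * t = R ^ 2 * (1 - t) := by ring
  have h_kernel : R ^ 2 * t + c ^ 2 = c ^ 2 * (1 - -(R ^ 2 / c ^ 2) * t) := by field_simp; ring
  have h_R : (R ^ 2) ^ a = R ^ (2 * a) := by rw [← rpow_natCast_mul hR.le]; norm_num
  have h_c : (c ^ 2) ^ (-s / 2) = c ^ (-s) := by rw [← rpow_natCast_mul hc.le]; ring_nf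
  rw [h_density, h_kernel, mul_rpow (by positivity) h_one_sub.le,
    mul_rpow (by positivity) h_euler_arg.le, h_R, h_c, neg_div, rpow_neg hR.le,
    rpow_neg h_one_sub.le, rpow_neg h_euler_arg.le]
  ring

theorem stmt11_general (d : ℕ) (hd : 2 ≤ d) (s : ℝ)
    (α : ℝ) (hα : α = (d : ℝ) - s) (R : ℝ) (hR : 0 < R) (c : ℝ) (hc : 0 < c)
    (cR : ℝ) (hcR : cR = Real.pi ^ (-(d : ℝ) / 2) * Real.Gamma (1 + s / 2) /
      (R ^ s * Real.Gamma (1 - α / 2))) :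
    ∫ x in Metric.ball (0 : EuclideanSpace ℝ (Fin d)) R,
        (cR / (R ^ 2 - ‖x‖ ^ 2) ^ (α / 2)) * (‖x‖ ^ 2 + c ^ 2) ^ (-s / 2) =
      c ^ (-s) * twoF1 (s / 2) ((d : ℝ) / 2) (1 + s / 2) (-(R ^ 2 / c ^ 2)) := by
  have : NeZero d := ⟨by omega⟩
  have h_exp : 1 + s / 2 - (d : ℝ) / 2 = 1 - α / 2 := by rw [hα]; ring
  have h_integrand : ∀ t ∈ Ioo (0 : ℝ) 1,
      t ^ ((d : ℝ) / 2 - 1) *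
          (cR / (R ^ 2 - R ^ 2 * t) ^ (α / 2) * (R ^ 2 * t + c ^ 2) ^ (-s / 2)) =
        cR * R ^ (-(2 * (α / 2))) * c ^ (-s) * (t ^ ((d : ℝ) / 2 - 1) *
          (1 - t) ^ (1 - α / 2 - 1) * (1 - -(R ^ 2 / c ^ 2) * t) ^ (-(s / 2))) := fun t ht => by
    rw [div_rpow_mul_rpow_eq_euler_integrand hR hc ht, sub_sub_cancel_left]
    ring
  have h_scale : π ^ ((d : ℝ) / 2) * π ^ (-(d : ℝ) / 2) *
      (R ^ (d : ℝ) * R ^ (-(2 * (α / 2)))) / R ^ s = 1 := by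
    rw [← rpow_add pi_pos, ← rpow_add hR, hα, div_eq_one_iff_eq (rpow_pos_of_pos hR s).ne']
    ring_nf
    simp
  rw [setIntegral_ball_euclideanSpace_comp_norm_sq hR
    (fun u => cR / (R ^ 2 - u) ^ (α / 2) * (u + c ^ 2) ^ (-s / 2)),
    setIntegral_congr_fun measurableSet_Ioo h_integrand, integral_const_mul, twoF1, h_exp, hcR]
  linear_combination (c ^ (-s) * (Gamma (1 + s / 2) / (Gamma (d / 2) * Gamma (1 - α / 2))) *
    ∫ t in Ioo 0 1, t ^ ((d : ℝ) / 2 - 1) * (1 - t) ^ (1 - α / 2 - 1) *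
      (1 - -(R ^ 2 / c ^ 2) * t) ^ (-(s / 2))) * h_scale

theorem stmt11 (d : ℕ) (hd : 2 ≤ d) (s : ℝ) (hs : (d : ℝ) - 2 < s) (hsd : s < (d : ℝ))
    (α : ℝ) (hα : α = (d : ℝ) - s) (R : ℝ) (hR : 0 < R) (c : ℝ) (hc : 0 < c)
    (cR : ℝ) (hcR : cR = Real.pi ^ (-(d : ℝ) / 2) * Real.Gamma (1 + s / 2) /
      (R ^ s * Real.Gamma (1 - α / 2))) :
    ∫ x in Metric.ball (0 : EuclideanSpace ℝ (Fin d)) R,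
        (cR / (R ^ 2 - ‖x‖ ^ 2) ^ (α / 2)) * (‖x‖ ^ 2 + c ^ 2) ^ (-s / 2) =
      c ^ (-s) * twoF1 (s / 2) ((d : ℝ) / 2) (1 + s / 2) (-(R ^ 2 / c ^ 2)) :=
  stmt11_general d hd s α hα R hR c hc cR hcR
end

section
/- Let $d \geq 2$, $0 < s < d$, $g \in (0,1)$, $y_1, y_2 > 0$, $\alpha = d-s$. Define $f(x) = \frac{(1+\gamma) y_1^{\alpha}}{(|x|^2+y_1^2)^{d-s/2}} - \frac{\gamma\, y_2^{\alpha}}{(|x|^2+y_2^2)^{d-s/2}}$ for $x \in \mathbb{R}^d$, where $\gamma > 0$ and $g = \gamma/(1+\gamma)$. Then $f(x) \geq 0$ for all $x \in \mathbb{R}^d$ if and only if $g^{1/d} \leq y_2/y_1 \leq g^{-1/\alpha}$. -/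
/-!
Write `t = y₂ / y₁` and `e = d - s/2`, so that `2e = d + α`. Since `γ = g (1 + γ)`, the
condition `f x ≥ 0` at `u = |x|²` reads `g t^α (u + y₁²)^e ≤ (u + y₂²)^e`. Taking `e`-th roots
turns this into an inequality between two affine functions of `u`, which holds on `[0, ∞)` iff
it holds at `u = 0` and the slopes compare. At `u = 0` the condition is `g ≤ t^d`; the slope
condition is `g t^α ≤ 1`.
-/

open Real

lemma forall_nonneg_mul_add_le_add_iff (k a b : ℝ) :
    (∀ u : ℝ, 0 ≤ u → k * (u + a) ≤ u + b) ↔ k * a ≤ b ∧ k ≤ 1 := by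
  constructor
  · intro h
    have h₀ : k * a ≤ b := by simpa using h 0 le_rfl
    refine ⟨h₀, ?_⟩
    by_contra! hk
    -- the inequality fails beyond the point `(b - k a) / (k - 1)` where the two lines cross
    have hu : 0 ≤ (b - k * a) / (k - 1) + 1 := by
      have : 0 ≤ (b - k * a) / (k - 1) := div_nonneg (by linarith) (by linarith)
      linarith
    have hcross : (k - 1) * ((b - k * a) / (k - 1)) = b - k * a :=
      mul_div_cancel₀ _ (by linarith)
    nlinarith [h _ hu]
  · rintro ⟨ha, hk⟩ u hu
    nlinarith

lemma forall_nonneg_mul_add_rpow_le_iff {e c a b : ℝ} (he : 0 < e) (hc : 0 ≤ c)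
    (ha : 0 ≤ a) (hb : 0 ≤ b) :
    (∀ u : ℝ, 0 ≤ u → c * (u + a) ^ e ≤ (u + b) ^ e) ↔ c * a ^ e ≤ b ^ e ∧ c ≤ 1 := by
  set k := c ^ e⁻¹
  have hk : 0 ≤ k := rpow_nonneg hc _
  have root_iff : ∀ p q : ℝ, 0 ≤ p → 0 ≤ q → (c * p ^ e ≤ q ^ e ↔ k * p ≤ q) := by
    intro p q hp hq
    rw [← rpow_inv_rpow hc he.ne', ← mul_rpow hk hp]
    exact rpow_le_rpow_iff (mul_nonneg hk hp) hq he
  calc (∀ u : ℝ, 0 ≤ u → c * (u + a) ^ e ≤ (u + b) ^ e)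
      ↔ ∀ u : ℝ, 0 ≤ u → k * (u + a) ≤ u + b :=
        forall₂_congr fun u hu => root_iff _ _ (by positivity) (by positivity)
    _ ↔ k * a ≤ b ∧ k ≤ 1 := forall_nonneg_mul_add_le_add_iff k a b
    _ ↔ c * a ^ e ≤ b ^ e ∧ c ≤ 1 :=
        and_congr (root_iff a b ha hb).symm
          (by simpa using (root_iff 1 1 zero_le_one zero_le_one).symm)

lemma forall_norm_sq_iff {E : Type*} [NormedAddCommGroup E] [NormedSpace ℝ E] [Nontrivial E]
    (P : ℝ → Prop) : (∀ x : E, P (‖x‖ ^ 2)) ↔ ∀ u : ℝ, 0 ≤ u → P u := by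
  refine ⟨fun h u hu => ?_, fun h x => h _ (sq_nonneg _)⟩
  obtain ⟨x, hx⟩ := exists_norm_eq E (sqrt_nonneg u)
  simpa [hx, sq_sqrt hu] using h x

lemma sub_div_nonneg_iff {γ A B P Q : ℝ} (hγ : 0 < 1 + γ) (hA : 0 < A) (hP : 0 < P)
    (hQ : 0 < Q) :
    0 ≤ (1 + γ) * A / P - γ * B / Q ↔ γ / (1 + γ) * (B / A) * P ≤ Q := by
  rw [sub_nonneg, div_le_div_iff₀ hQ hP,
    show γ / (1 + γ) * (B / A) * P = γ * B * P / ((1 + γ) * A) by field_simp,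
    div_le_iff₀ (by positivity)]
  constructor <;> intro h <;> linarith

lemma mul_div_rpow_mul_sq_rpow_le_iff {δ α e g y₁ y₂ : ℝ} (hδ : 0 < δ) (hg : 0 ≤ g)
    (hy₁ : 0 < y₁) (hy₂ : 0 < y₂) (he : 2 * e = δ + α) :
    g * (y₂ / y₁) ^ α * (y₁ ^ 2) ^ e ≤ (y₂ ^ 2) ^ e ↔ g ^ (1 / δ) ≤ y₂ / y₁ := by
  have sq_rpow : ∀ y : ℝ, 0 < y → (y ^ 2) ^ e = y ^ δ * y ^ α := fun y hy => by
    rw [← rpow_natCast, ← rpow_mul hy.le, Nat.cast_ofNat, he, rpow_add hy]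
  rw [sq_rpow y₁ hy₁, sq_rpow y₂ hy₂, div_rpow hy₂.le hy₁.le,
    show g * (y₂ ^ α / y₁ ^ α) * (y₁ ^ δ * y₁ ^ α) = g * y₁ ^ δ * y₂ ^ α by
      field_simp [(rpow_pos_of_pos hy₁ α).ne'],
    mul_le_mul_iff_left₀ (rpow_pos_of_pos hy₂ α), ← le_div_iff₀ (rpow_pos_of_pos hy₁ δ),
    ← div_rpow hy₂.le hy₁.le, one_div, rpow_inv_le_iff_of_pos hg (by positivity) hδ]

lemma le_rpow_neg_one_div_iff {α g t : ℝ} (hα : 0 < α) (hg : 0 < g) (ht : 0 ≤ t) :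
    t ≤ g ^ (-1 / α) ↔ g * t ^ α ≤ 1 := by
  rw [neg_div, rpow_neg hg.le, ← inv_rpow hg.le, one_div,
    le_rpow_inv_iff_of_pos ht (inv_nonneg.mpr hg.le) hα, ← mul_le_mul_iff_right₀ hg,
    mul_inv_cancel₀ hg.ne']

theorem stmt14_general (d : ℕ) (hd : 2 ≤ d) (s : ℝ) (hsd : s < (d : ℝ))
    (α : ℝ) (hα : α = (d : ℝ) - s)
    (γ : ℝ) (hγ : 0 < γ) (g : ℝ) (hg : g = γ / (1 + γ)) (hg0 : 0 < g)
    (y₁ y₂ : ℝ) (hy₁ : 0 < y₁) (hy₂ : 0 < y₂)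
    (f : EuclideanSpace ℝ (Fin d) → ℝ)
    (hf : ∀ x, f x =
      (1 + γ) * y₁ ^ α / (‖x‖ ^ 2 + y₁ ^ 2) ^ ((d : ℝ) - s / 2) -
        γ * y₂ ^ α / (‖x‖ ^ 2 + y₂ ^ 2) ^ ((d : ℝ) - s / 2)) :
    (∀ x, 0 ≤ f x) ↔
      g ^ (1 / (d : ℝ)) ≤ y₂ / y₁ ∧ y₂ / y₁ ≤ g ^ (-1 / α) := by
  have : NeZero d := ⟨by omega⟩
  have hd0 : (0 : ℝ) < d := by exact_mod_cast (by omega : 0 < d)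
  have he : 0 < (d : ℝ) - s / 2 := by linarith
  set e := (d : ℝ) - s / 2
  have hα0 : 0 < α := by linarith
  calc (∀ x, 0 ≤ f x)
      ↔ ∀ u : ℝ, 0 ≤ u → g * (y₂ / y₁) ^ α * (u + y₁ ^ 2) ^ e ≤ (u + y₂ ^ 2) ^ e := by
        simp only [hf]
        refine (forall_norm_sq_iff (E := EuclideanSpace ℝ (Fin d)) fun u =>
          0 ≤ (1 + γ) * y₁ ^ α / (u + y₁ ^ 2) ^ e - γ * y₂ ^ α / (u + y₂ ^ 2) ^ e).trans <|
          forall₂_congr fun u hu => ?_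
        rw [sub_div_nonneg_iff (by linarith) (by positivity) (by positivity) (by positivity), ← hg,
          div_rpow hy₂.le hy₁.le]
    _ ↔ _ :=
        forall_nonneg_mul_add_rpow_le_iff he (by positivity) (by positivity) (by positivity)
    _ ↔ _ := and_congr (mul_div_rpow_mul_sq_rpow_le_iff hd0 hg0.le hy₁ hy₂ (by rw [hα]; ring))
        (le_rpow_neg_one_div_iff hα0 hg0 (by positivity)).symm

theorem stmt14 (d : ℕ) (hd : 2 ≤ d) (s : ℝ) (hs : 0 < s) (hsd : s < (d : ℝ))
    (α : ℝ) (hα : α = (d : ℝ) - s)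
    (γ : ℝ) (hγ : 0 < γ) (g : ℝ) (hg : g = γ / (1 + γ)) (hg0 : 0 < g) (hg1 : g < 1)
    (y₁ y₂ : ℝ) (hy₁ : 0 < y₁) (hy₂ : 0 < y₂)
    (f : EuclideanSpace ℝ (Fin d) → ℝ)
    (hf : ∀ x, f x =
      (1 + γ) * y₁ ^ α / (‖x‖ ^ 2 + y₁ ^ 2) ^ ((d : ℝ) - s / 2) -
        γ * y₂ ^ α / (‖x‖ ^ 2 + y₂ ^ 2) ^ ((d : ℝ) - s / 2)) :
    (∀ x, 0 ≤ f x) ↔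
      g ^ (1 / (d : ℝ)) ≤ y₂ / y₁ ∧ y₂ / y₁ ≤ g ^ (-1 / α) :=
  stmt14_general d hd s hsd α hα γ hγ g hg hg0 y₁ y₂ hy₁ hy₂ f hf
end
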